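/- arXiv:1902.00827 — 2 statements merged into one kernel-verified Lean document; each statement's English description precedes it below -/
import Mathlib

section
/- If a subset X ⊆ T is dominant with respect to a nonempty subset C ⊆ I, then the cardinality of X is at most the cardinality of C. -/
/-- `X ⊆ T` is dominant with respect to `C ⊆ I` (for the family of linear orders `o`)
if either `X = ∅`, or `X ≠ ∅` and there is no `y : T` with `min_i X <_i y` for all `i ∈ C`. -/
def Dominant {T I : Type*} (o : I → LinearOrder T) (X : Finset T) (C : Finset I) : Prop :=
  ∀ hX : X.Nonempty, ¬ ∃ y : T, ∀ i ∈ C, (o i).lt (@Finset.min' T (o i) X hX) y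

theorem Dominant.subset_image_min' {T I : Type*} [DecidableEq T] {o : I → LinearOrder T}
    {X : Finset T} {C : Finset I} (hdom : Dominant o X C) (hX : X.Nonempty) :
    X ⊆ C.image fun i => @Finset.min' T (o i) X hX := by
  intro x hx
  by_contra hx_not_min
  refine hdom hX ⟨x, fun i hi => ?_⟩
  let _ := o i
  exact lt_of_le_of_ne (X.min'_le x hx) fun h => hx_not_min (h ▸ Finset.mem_image_of_mem _ hi)

theorem Dominant.card_le {T I : Type*} {o : I → LinearOrder T} {X : Finset T} {C : Finset I}
    (hdom : Dominant o X C) : X.card ≤ C.card := by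
  classical
  rcases X.eq_empty_or_nonempty with rfl | hX
  · simp
  · exact (Finset.card_le_card (hdom.subset_image_min' hX)).trans Finset.card_image_le

theorem stmt2_general {T I : Type*} (o : I → LinearOrder T)
    (X : Finset T) (C : Finset I)
    (hdom : Dominant o X C) :
    X.card ≤ C.card :=
  hdom.card_le

/-- If `X ⊆ T` is dominant with respect to a nonempty `C ⊆ I`, then `|X| ≤ |C|`. -/
theorem stmt2 {T I : Type*} [Fintype T] [Fintype I] [Nonempty T] [Nonempty I]
    [DecidableEq T] [DecidableEq I] (o : I → LinearOrder T)
    (X : Finset T) (C : Finset I) (hC : C.Nonempty)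
    (hdom : Dominant o X C) :
    X.card ≤ C.card :=
  stmt2_general o X C hdom
end

section
/- Fix a color i ∈ I. Let e be the number of balanced 0-cells, let f be the number of non-balanced 0-cells of type i, and let g be the number of 1-cells of type i other than (∅, {i}). Then e + 2f = 1 + 2g. In particular, the number of balanced 0-cells is odd. -/
/-- A pair `(X, C)` is a cell if `C ≠ ∅`, `X` is dominant with respect to `C`,
and `|C \ c(X)| ≤ 1`. -/
def IsCell {T I : Type*} [DecidableEq T] [DecidableEq I]
    (o : I → LinearOrder T) (c : T → I) (X : Finset T) (C : Finset I) : Prop :=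
  C.Nonempty ∧ Dominant o X C ∧ (C \ X.image c).card ≤ 1

/-- A 0-cell is a cell `(X, C)` with `|C| = |X|`. -/
def IsZeroCell {T I : Type*} [DecidableEq T] [DecidableEq I]
    (o : I → LinearOrder T) (c : T → I) (X : Finset T) (C : Finset I) : Prop :=
  IsCell o c X C ∧ C.card = X.card

/-- A 1-cell is a cell `(X, C)` with `|C| = |X| + 1`. -/
def IsOneCell {T I : Type*} [DecidableEq T] [DecidableEq I]
    (o : I → LinearOrder T) (c : T → I) (X : Finset T) (C : Finset I) : Prop :=
  IsCell o c X C ∧ C.card = X.card + 1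

/-- A 1-cell `(Y, D)` is a face of a 0-cell `(X, C)` if either `D = C` and
`Y = X \ {x}` for some `x ∈ X`, or `Y = X` and `D = C ∪ {i}` for some `i ∉ C`. -/
def IsFace {T I : Type*} [DecidableEq T] [DecidableEq I]
    (o : I → LinearOrder T) (c : T → I)
    (Y : Finset T) (D : Finset I) (X : Finset T) (C : Finset I) : Prop :=
  IsOneCell o c Y D ∧ IsZeroCell o c X C ∧
    ((D = C ∧ ∃ x ∈ X, Y = X.erase x) ∨ (Y = X ∧ ∃ i, i ∉ C ∧ D = insert i C))

section Base
variable {T : Type*}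

lemma lo_not_lt (l : LinearOrder T) {a b : T} : ¬ l.lt a b ↔ l.le b a := by
  letI := l; exact not_lt

lemma lo_le_refl (l : LinearOrder T) (a : T) : l.le a a := by letI := l; exact le_refl a

lemma lo_le_trans (l : LinearOrder T) {a b d : T} (h : l.le a b) (h' : l.le b d) : l.le a d := by
  letI := l; exact le_trans h h'

lemma lo_antisymm (l : LinearOrder T) {a b : T} (h : l.le a b) (h' : l.le b a) : a = b := by
  letI := l; exact le_antisymm h h'

lemma lo_lt_irrefl (l : LinearOrder T) (a : T) : ¬ l.lt a a := by letI := l; exact lt_irrefl a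

lemma lo_min'_mem (l : LinearOrder T) (X : Finset T) (hX : X.Nonempty) :
    @Finset.min' T l X hX ∈ X := @Finset.min'_mem T l X hX

lemma lo_min'_le (l : LinearOrder T) (X : Finset T) (hX : X.Nonempty) {x : T} (hx : x ∈ X) :
    l.le (@Finset.min' T l X hX) x := @Finset.min'_le T l X x hx

lemma lo_le_min' (l : LinearOrder T) (X : Finset T) (hX : X.Nonempty) {x : T}
    (h : ∀ y ∈ X, l.le x y) : l.le x (@Finset.min' T l X hX) := @Finset.le_min' T l X hX x h

lemma lo_min'_subset (l : LinearOrder T) {X Y : Finset T} (hY : Y.Nonempty) (hYX : Y ⊆ X) :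
    l.le (@Finset.min' T l X (hY.mono hYX)) (@Finset.min' T l Y hY) :=
  lo_min'_le l X _ (hYX (lo_min'_mem l Y hY))

end Base


section Dom
variable {T I : Type*} (o : I → LinearOrder T)

/-- abbreviation for the minimum of `X` w.r.t. color `j`. -/
noncomputable def mn (X : Finset T) (hX : X.Nonempty) (j : I) : T :=
  @Finset.min' T (o j) X hX

lemma dominant_iff {X : Finset T} (hX : X.Nonempty) {C : Finset I} :
    Dominant o X C ↔ ∀ y : T, ∃ j ∈ C, (o j).le y (mn o X hX j) := by
  constructor
  · intro h y
    by_contra hy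
    push_neg at hy
    exact h hX ⟨y, fun j hj => by
      by_contra hlt
      exact hlt (hy j hj)⟩
  · intro h _ ⟨y, hy⟩
    obtain ⟨j, hj, hle⟩ := h y
    exact (lo_not_lt (o j)).mpr hle (hy j hj)

lemma dominant_of_subset {X Y : Finset T} {C : Finset I} (hYX : Y ⊆ X)
    (h : Dominant o X C) : Dominant o Y C := by
  intro hY ⟨y, hy⟩
  have hX : X.Nonempty := hY.mono hYX
  refine h hX ⟨y, fun j hj => ?_⟩
  letI := o j
  exact lt_of_le_of_lt (lo_min'_subset (o j) hY hYX) (hy j hj)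

lemma dominant_mono {X : Finset T} {C C' : Finset I} (hCC : C ⊆ C')
    (h : Dominant o X C) : Dominant o X C' := by
  intro hX ⟨y, hy⟩
  exact h hX ⟨y, fun j hj => hy j (hCC hj)⟩

lemma dominant_mem_eq_min {X : Finset T} (hX : X.Nonempty) {C : Finset I}
    (h : Dominant o X C) {x : T} (hx : x ∈ X) : ∃ j ∈ C, mn o X hX j = x := by
  obtain ⟨j, hj, hle⟩ := (dominant_iff o hX).mp h x
  exact ⟨j, hj, lo_antisymm (o j) (lo_min'_le (o j) X hX hx) hle⟩

lemma dominant_subset_image [DecidableEq T] {X : Finset T} (hX : X.Nonempty) {C : Finset I}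
    (h : Dominant o X C) : X ⊆ C.image (mn o X hX) := by
  intro x hx
  obtain ⟨j, hj, hjx⟩ := dominant_mem_eq_min o hX h hx
  exact Finset.mem_image.mpr ⟨j, hj, hjx⟩

lemma dominant_card_le [DecidableEq T] {X : Finset T} (hX : X.Nonempty) {C : Finset I}
    (h : Dominant o X C) : X.card ≤ C.card :=
  le_trans (Finset.card_le_card (dominant_subset_image o hX h)) (Finset.card_image_le)

end Dom


section Coll
variable {α β : Type*} [DecidableEq α] [DecidableEq β]

/-- a finset on which `f` drops cardinality by exactly one has a unique collision pair. -/
lemma exists_unique_collision {S : Finset α} {f : α → β}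
    (h : S.card = (S.image f).card + 1) :
    ∃ a ∈ S, ∃ b ∈ S, a ≠ b ∧ f a = f b ∧
      ∀ k ∈ S, ∀ k' ∈ S, f k = f k' → k ≠ k' →
        ((k = a ∧ k' = b) ∨ (k = b ∧ k' = a)) := by
  have hninj : ¬ Set.InjOn f S := by
    intro hinj
    have := Finset.card_image_of_injOn hinj
    omega
  rw [Set.InjOn] at hninj
  push_neg at hninj
  obtain ⟨a, ha, b, hb, hne, hab⟩ := hninj
  simp only [Finset.mem_coe] at ha hb
  have key : ∀ x ∈ S, Set.InjOn f (S.erase x) → True := fun _ _ _ => trivial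
  have himg : ∀ x ∈ S, ∀ y ∈ S, x ≠ y → f x = f y → (S.erase x).image f = S.image f := by
    intro x hx y hy hxy hfxy
    apply Finset.Subset.antisymm
    · exact Finset.image_subset_image (Finset.erase_subset x S)
    · intro v hv
      obtain ⟨u, hu, huv⟩ := Finset.mem_image.mp hv
      by_cases hux : u = x
      · exact Finset.mem_image.mpr ⟨y, Finset.mem_erase.mpr ⟨(Ne.symm hxy), hy⟩,
          by rw [← huv, hux, hfxy]⟩
      · exact Finset.mem_image.mpr ⟨u, Finset.mem_erase.mpr ⟨hux, hu⟩, huv⟩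
  have hinjerase : ∀ x ∈ S, ∀ y ∈ S, x ≠ y → f x = f y → Set.InjOn f (S.erase x) := by
    intro x hx y hy hxy hfxy
    have h1 : ((S.erase x).image f).card = (S.erase x).card := by
      rw [himg x hx y hy hxy hfxy, Finset.card_erase_of_mem hx]
      omega
    exact Finset.injOn_of_card_image_eq h1
  have hia : Set.InjOn f (S.erase a) := hinjerase a ha b hb hab hne
  have hib : Set.InjOn f (S.erase b) := hinjerase b hb a ha (Ne.symm hab) hne.symm
  refine ⟨a, ha, b, hb, hab, hne, ?_⟩
  intro k hk k' hk' hf hkk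
  by_cases hka : k = a
  · subst hka
    -- k' ≠ k = a; show k' = b
    have : k' = b := by
      by_contra hkb
      have h1 : (k : α) ∈ S.erase b := Finset.mem_erase.mpr ⟨hab, hk⟩
      have h2 : k' ∈ S.erase b := Finset.mem_erase.mpr ⟨hkb, hk'⟩
      exact hkk (hib h1 h2 hf)
    exact Or.inl ⟨rfl, this⟩
  · by_cases hkb : k = b
    · subst hkb
      have : k' = a := by
        by_contra hka'
        have h1 : (k : α) ∈ S.erase a := Finset.mem_erase.mpr ⟨Ne.symm hab, hk⟩
        have h2 : k' ∈ S.erase a := Finset.mem_erase.mpr ⟨hka', hk'⟩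
        exact hkk (hia h1 h2 hf)
      exact Or.inr ⟨rfl, this⟩
    · exfalso
      by_cases hk'a : k' = a
      · subst hk'a
        have h1 : (k : α) ∈ S.erase b := Finset.mem_erase.mpr ⟨hkb, hk⟩
        have h2 : k' ∈ S.erase b := Finset.mem_erase.mpr ⟨hab, hk'⟩
        exact hkk (hib h1 h2 hf)
      · have h1 : (k : α) ∈ S.erase a := Finset.mem_erase.mpr ⟨hka, hk⟩
        have h2 : k' ∈ S.erase a := Finset.mem_erase.mpr ⟨hk'a, hk'⟩
        exact hkk (hia h1 h2 hf)

end Coll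

section Cells
variable {T I : Type*} [DecidableEq T] [DecidableEq I]
  (o : I → LinearOrder T) (c : T → I)

lemma zeroCell_nonempty {X : Finset T} {C : Finset I}
    (h : IsZeroCell o c X C) : X.Nonempty := by
  rcases h with ⟨⟨hC, _, _⟩, hcard⟩
  rw [← Finset.card_pos] at hC ⊢
  omega

lemma zeroCell_image {X : Finset T} {C : Finset I}
    (h : IsZeroCell o c X C) (hX : X.Nonempty) : C.image (mn o X hX) = X := by
  rcases h with ⟨⟨hC, hdom, _⟩, hcard⟩
  apply Finset.Subset.antisymm
  · intro v hv
    obtain ⟨j, hj, hjv⟩ := Finset.mem_image.mp hv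
    rw [← hjv]; exact lo_min'_mem (o j) X hX
  · exact dominant_subset_image o hX hdom

lemma zeroCell_injOn {X : Finset T} {C : Finset I}
    (h : IsZeroCell o c X C) (hX : X.Nonempty) : Set.InjOn (mn o X hX) C := by
  apply Finset.injOn_of_card_image_eq
  rw [zeroCell_image o c h hX, h.2]

lemma mn_le_of_subset {X Y : Finset T} (hY : Y.Nonempty) (hYX : Y ⊆ X) (j : I) :
    (o j).le (mn o X (hY.mono hYX) j) (mn o Y hY j) := lo_min'_subset (o j) hY hYX

lemma mn_insert_of_le {Y : Finset T} (hY : Y.Nonempty) {z : T} {j : I}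
    (h : (o j).le z (mn o Y hY j)) :
    mn o (insert z Y) (Finset.insert_nonempty z Y) j = z := by
  apply lo_antisymm (o j)
  · exact lo_min'_le (o j) _ _ (Finset.mem_insert_self z Y)
  · apply lo_le_min'
    intro y hy
    rcases Finset.mem_insert.mp hy with rfl | hy
    · exact lo_le_refl (o j) y
    · exact lo_le_trans (o j) h (lo_min'_le (o j) Y hY hy)

lemma mn_insert_of_not_le {Y : Finset T} (hY : Y.Nonempty) {z : T} {j : I}
    (h : ¬ (o j).le z (mn o Y hY j)) :
    mn o (insert z Y) (Finset.insert_nonempty z Y) j = mn o Y hY j := by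
  have hzy : (o j).le (mn o Y hY j) z := by
    letI := o j
    exact le_of_not_ge h
  apply lo_antisymm (o j)
  · exact mn_le_of_subset o hY (Finset.subset_insert z Y) j
  · apply lo_le_min'
    intro y hy
    rcases Finset.mem_insert.mp hy with rfl | hy
    · exact hzy
    · exact lo_min'_le (o j) Y hY hy

/-- structure of a type-`i` one-cell: the coloring is injective on `Y` with image `D.erase i`. -/
lemma door_color {Y : Finset T} {D : Finset I} {i : I}
    (h : IsOneCell o c Y D) (htype : D \ Y.image c = {i}) :
    Set.InjOn c Y ∧ Y.image c = D.erase i ∧ i ∈ D := by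
  have hiD : i ∈ D := by
    have : i ∈ D \ Y.image c := by rw [htype]; exact Finset.mem_singleton_self i
    exact (Finset.mem_sdiff.mp this).1
  have hiA : i ∉ Y.image c := by
    have : i ∈ D \ Y.image c := by rw [htype]; exact Finset.mem_singleton_self i
    exact (Finset.mem_sdiff.mp this).2
  set A := Y.image c with hA
  have hcard1 : (D \ A).card = 1 := by rw [htype]; simp
  have hDA : (D ∩ A).card + (D \ A).card = D.card := Finset.card_inter_add_card_sdiff D A
  have hAle : A.card ≤ Y.card := Finset.card_image_le
  have hDcard : D.card = Y.card + 1 := h.2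
  have hsub : D ∩ A ⊆ A := Finset.inter_subset_right
  have hDAle : (D ∩ A).card ≤ A.card := Finset.card_le_card hsub
  have hAY : A.card = Y.card := by omega
  have hDAeq : (D ∩ A).card = A.card := by omega
  have hAsubD : A = D ∩ A := (Finset.eq_of_subset_of_card_le hsub (le_of_eq hDAeq.symm)).symm
  constructor
  · exact Finset.injOn_of_card_image_eq (by rw [← hA, hAY])
  refine ⟨?_, hiD⟩
  ext a
  simp only [Finset.mem_erase]
  constructor
  · intro ha
    have haD : a ∈ D := by
      have := hAsubD ▸ ha
      exact (Finset.mem_inter.mp (hAsubD ▸ ha)).1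
    exact ⟨fun hai => hiA (hai ▸ ha), haD⟩
  · rintro ⟨hai, haD⟩
    by_contra hha
    have : a ∈ D \ A := Finset.mem_sdiff.mpr ⟨haD, hha⟩
    rw [htype] at this
    exact hai (Finset.mem_singleton.mp this)

end Cells

section Rooms
variable {T I : Type*} [Fintype T] [Fintype I] [DecidableEq T] [DecidableEq I]
  (o : I → LinearOrder T) (c : T → I) (i : I)

open scoped Classical

lemma image_erase_of_injOn {X : Finset T} (hinj : Set.InjOn c ↑X) {x : T} (hx : x ∈ X) :
    (X.erase x).image c = (X.image c).erase (c x) := by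
  ext b
  simp only [Finset.mem_image, Finset.mem_erase]
  constructor
  · rintro ⟨y, ⟨hyx, hy⟩, rfl⟩
    exact ⟨fun h => hyx (hinj hy hx h), y, hy, rfl⟩
  · rintro ⟨hb, y, hy, rfl⟩
    exact ⟨y, ⟨fun h => hb (by rw [h]), hy⟩, rfl⟩

lemma image_erase_of_twin {X : Finset T} {x y : T} (hx : x ∈ X) (hy : y ∈ X)
    (hxy : x ≠ y) (hc : c x = c y) : (X.erase x).image c = X.image c := by
  apply Finset.Subset.antisymm (Finset.image_subset_image (Finset.erase_subset x X))
  intro b hb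
  obtain ⟨u, hu, rfl⟩ := Finset.mem_image.mp hb
  by_cases hux : u = x
  · exact Finset.mem_image.mpr ⟨y, Finset.mem_erase.mpr ⟨Ne.symm hxy, hy⟩, by rw [hux, hc]⟩
  · exact Finset.mem_image.mpr ⟨u, Finset.mem_erase.mpr ⟨hux, hu⟩, rfl⟩

/-- characterization of the type-`i` doors that are faces of a given 0-cell. -/
lemma door_face_iff {X : Finset T} {C : Finset I} (hz : IsZeroCell o c X C)
    (q : Finset T × Finset I) :
    ((IsOneCell o c q.1 q.2 ∧ q.2 \ q.1.image c = {i}) ∧ IsFace o c q.1 q.2 X C)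
    ↔ ((∃ x ∈ X, q = (X.erase x, C) ∧ C \ (X.erase x).image c = {i})
      ∨ (∃ j, j ∉ C ∧ q = (X, insert j C) ∧ (insert j C) \ X.image c = {i})) := by
  constructor
  · rintro ⟨⟨h1, htype⟩, _, _, geom⟩
    rcases geom with ⟨hDC, x, hx, hY⟩ | ⟨hY, j, hj, hD⟩
    · left
      refine ⟨x, hx, ?_, ?_⟩
      · exact Prod.ext hY hDC
      · rw [← hY, ← hDC]; exact htype
    · right
      refine ⟨j, hj, ?_, ?_⟩
      · exact Prod.ext hY hD
      · rw [← hY, ← hD]; exact htype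
  · rintro (⟨x, hx, rfl, htype⟩ | ⟨j, hj, rfl, htype⟩)
    · have hone : IsOneCell o c (X.erase x) C := by
        refine ⟨⟨hz.1.1, dominant_of_subset o (Finset.erase_subset x X) hz.1.2.1, ?_⟩, ?_⟩
        · rw [htype]; simp
        · rw [Finset.card_erase_of_mem hx, hz.2]
          have : 0 < X.card := Finset.card_pos.mpr ⟨x, hx⟩
          omega
      exact ⟨⟨hone, htype⟩, hone, hz, Or.inl ⟨rfl, x, hx, rfl⟩⟩
    · have hone : IsOneCell o c X (insert j C) := by
        refine ⟨⟨Finset.insert_nonempty j C,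
          dominant_mono o (Finset.subset_insert j C) hz.1.2.1, ?_⟩, ?_⟩
        · rw [htype]; simp
        · rw [Finset.card_insert_of_notMem hj, hz.2]
      exact ⟨⟨hone, htype⟩, hone, hz, Or.inr ⟨rfl, j, hj, rfl⟩⟩

lemma room_count_balanced {X : Finset T} {C : Finset I} (hz : IsZeroCell o c X C)
    (hbal : C = X.image c) :
    (Finset.univ.filter (fun q : Finset T × Finset I =>
      (IsOneCell o c q.1 q.2 ∧ q.2 \ q.1.image c = {i}) ∧ IsFace o c q.1 q.2 X C)).card
      = 1 := by
  have hinj : Set.InjOn c ↑X := by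
    apply Finset.injOn_of_card_image_eq
    rw [← hbal, hz.2]
  rw [Finset.card_eq_one]
  by_cases hiC : i ∈ C
  · -- there is x₀ ∈ X with c x₀ = i
    obtain ⟨x₀, hx₀, hcx₀⟩ := Finset.mem_image.mp (hbal ▸ hiC)
    refine ⟨(X.erase x₀, C), ?_⟩
    ext q
    simp only [Finset.mem_filter, Finset.mem_univ, true_and, Finset.mem_singleton]
    rw [door_face_iff o c i hz q]
    constructor
    · rintro (⟨x, hx, rfl, htype⟩ | ⟨j, hj, rfl, htype⟩)
      · -- kind a : C \ (X.erase x).image c = {c x}, so c x = i, so x = x₀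
        rw [image_erase_of_injOn c hinj hx, ← hbal,
          Finset.sdiff_erase_self (by rw [hbal]; exact Finset.mem_image_of_mem c hx)] at htype
        have hcx : c x = i := Finset.singleton_injective htype
        have : x = x₀ := hinj hx hx₀ (by rw [hcx, hcx₀])
        rw [this]
      · -- kind b : (insert j C) \ C = {j} = {i}, so j = i ∈ C, contradiction
        exfalso
        rw [← hbal, Finset.insert_sdiff_of_notMem _ hj, Finset.sdiff_self,
          LawfulSingleton.insert_empty_eq] at htype
        exact hj (Finset.singleton_injective htype ▸ hiC)
    · rintro rfl
      left
      refine ⟨x₀, hx₀, rfl, ?_⟩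
      rw [image_erase_of_injOn c hinj hx₀, ← hbal,
        Finset.sdiff_erase_self (hcx₀ ▸ hiC : c x₀ ∈ C), hcx₀]
  · refine ⟨(X, insert i C), ?_⟩
    ext q
    simp only [Finset.mem_filter, Finset.mem_univ, true_and, Finset.mem_singleton]
    rw [door_face_iff o c i hz q]
    constructor
    · rintro (⟨x, hx, rfl, htype⟩ | ⟨j, hj, rfl, htype⟩)
      · exfalso
        rw [image_erase_of_injOn c hinj hx, ← hbal,
          Finset.sdiff_erase_self (by rw [hbal]; exact Finset.mem_image_of_mem c hx)] at htype
        have hcx : c x = i := Finset.singleton_injective htype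
        exact hiC (hcx ▸ (by rw [hbal]; exact Finset.mem_image_of_mem c hx))
      · rw [← hbal, Finset.insert_sdiff_of_notMem _ hj, Finset.sdiff_self,
          LawfulSingleton.insert_empty_eq] at htype
        rw [Finset.singleton_injective htype]
    · rintro rfl
      right
      refine ⟨i, hiC, rfl, ?_⟩
      rw [← hbal, Finset.insert_sdiff_of_notMem _ hiC, Finset.sdiff_self,
        LawfulSingleton.insert_empty_eq]

end Rooms

section Rooms2
variable {T I : Type*} [Fintype T] [Fintype I] [DecidableEq T] [DecidableEq I]
  (o : I → LinearOrder T) (c : T → I) (i : I)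

open scoped Classical

lemma sdiff_erase_of_not_mem {C A : Finset I} {b : I} (hb : b ∉ C) :
    C \ A.erase b = C \ A := by
  ext a
  simp only [Finset.mem_sdiff, Finset.mem_erase]
  constructor
  · rintro ⟨ha, h⟩
    exact ⟨ha, fun hA => h ⟨fun hab => hb (hab ▸ ha), hA⟩⟩
  · rintro ⟨ha, h⟩
    exact ⟨ha, fun hh => h hh.2⟩

lemma insert_sdiff_of_mem {C A : Finset I} {j : I} (hj : j ∈ A) :
    insert j C \ A = C \ A := by
  ext a
  simp only [Finset.mem_sdiff, Finset.mem_insert]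
  constructor
  · rintro ⟨rfl | ha, h⟩
    · exact absurd hj h
    · exact ⟨ha, h⟩
  · rintro ⟨ha, h⟩
    exact ⟨Or.inr ha, h⟩

lemma insert_ne_singleton {b i : I} {s : Finset I} (hbi : b ≠ i) : insert b s ≠ {i} := by
  intro h
  have : b ∈ ({i} : Finset I) := h ▸ Finset.mem_insert_self b s
  exact hbi (Finset.mem_singleton.mp this)

lemma room_count_type {X : Finset T} {C : Finset I} (hz : IsZeroCell o c X C)
    (htype : C \ X.image c = {i}) :
    (Finset.univ.filter (fun q : Finset T × Finset I =>
      (IsOneCell o c q.1 q.2 ∧ q.2 \ q.1.image c = {i}) ∧ IsFace o c q.1 q.2 X C)).card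
      = 2 := by
  have hiC : i ∈ C := by
    have : i ∈ C \ (X.image c) := htype ▸ Finset.mem_singleton_self i
    exact (Finset.mem_sdiff.mp this).1
  have hiA : i ∉ (X.image c) := by
    have : i ∈ C \ (X.image c) := htype ▸ Finset.mem_singleton_self i
    exact (Finset.mem_sdiff.mp this).2
  have hcard1 : (C \ (X.image c)).card = 1 := by rw [htype]; simp
  have hCA : (C ∩ (X.image c)).card + (C \ (X.image c)).card = C.card := Finset.card_inter_add_card_sdiff C (X.image c)
  have hAle : (X.image c).card ≤ X.card := Finset.card_image_le
  have hCX : C.card = X.card := hz.2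
  have hCerase : C.erase i ⊆ (X.image c) := by
    intro a ha
    rw [Finset.mem_erase] at ha
    by_contra haA
    have : a ∈ C \ (X.image c) := Finset.mem_sdiff.mpr ⟨ha.2, haA⟩
    exact ha.1 (Finset.mem_singleton.mp (htype ▸ this))
  have hXne : X.Nonempty := zeroCell_nonempty o c hz
  by_cases hinj : Set.InjOn c ↑X
  · -- Case (X.image c) : c injective on X; (X.image c) \ C = {j₀}
    have hAcard : (X.image c).card = X.card := Finset.card_image_of_injOn hinj
    have hAC : ((X.image c) ∩ C).card + ((X.image c) \ C).card = (X.image c).card := Finset.card_inter_add_card_sdiff (X.image c) C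
    have hACer : (X.image c) ∩ C = C.erase i := by
      apply Finset.Subset.antisymm
      · intro a ha
        rw [Finset.mem_inter] at ha
        exact Finset.mem_erase.mpr ⟨fun h => hiA (h ▸ ha.1), ha.2⟩
      · intro a ha
        exact Finset.mem_inter.mpr ⟨hCerase ha, (Finset.mem_erase.mp ha).2⟩
    have hACcard : ((X.image c) \ C).card = 1 := by
      have h1 : (C.erase i).card = C.card - 1 := Finset.card_erase_of_mem hiC
      have h2 : 0 < C.card := Finset.card_pos.mpr ⟨i, hiC⟩
      rw [hACer, h1] at hAC
      omega
    obtain ⟨j₀, hj₀⟩ := Finset.card_eq_one.mp hACcard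
    have hj₀A : j₀ ∈ (X.image c) := (Finset.mem_sdiff.mp (hj₀ ▸ Finset.mem_singleton_self j₀)).1
    have hj₀C : j₀ ∉ C := (Finset.mem_sdiff.mp (hj₀ ▸ Finset.mem_singleton_self j₀)).2
    obtain ⟨x₀, hx₀, hcx₀⟩ := Finset.mem_image.mp hj₀A
    have hset : (Finset.univ.filter (fun q : Finset T × Finset I =>
        (IsOneCell o c q.1 q.2 ∧ q.2 \ q.1.image c = {i}) ∧ IsFace o c q.1 q.2 X C))
        = {(X.erase x₀, C), (X, insert j₀ C)} := by
      ext q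
      simp only [Finset.mem_filter, Finset.mem_univ, true_and, Finset.mem_insert,
        Finset.mem_singleton]
      rw [door_face_iff o c i hz q]
      constructor
      · rintro (⟨x, hx, rfl, hty⟩ | ⟨j, hj, rfl, hty⟩)
        · left
          rw [image_erase_of_injOn c hinj hx] at hty
          by_cases hcxC : c x ∈ C
          · exfalso
            rw [Finset.sdiff_erase hcxC, htype] at hty
            exact insert_ne_singleton
              (fun h => hiA (by rw [← h]; exact Finset.mem_image_of_mem c hx)) hty
          · have hm : c x ∈ (X.image c) \ C := Finset.mem_sdiff.mpr ⟨Finset.mem_image_of_mem c hx, hcxC⟩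
            have hcx : c x = j₀ := Finset.mem_singleton.mp (by rw [← hj₀]; exact hm)
            have : x = x₀ := hinj hx hx₀ (by rw [hcx, hcx₀])
            rw [this]
        · right
          by_cases hjA : j ∈ (X.image c)
          · have hm : j ∈ (X.image c) \ C := Finset.mem_sdiff.mpr ⟨hjA, hj⟩
            have hjj : j = j₀ := Finset.mem_singleton.mp (by rw [← hj₀]; exact hm)
            rw [hjj]
          · exfalso
            rw [Finset.insert_sdiff_of_notMem _ hjA, htype] at hty
            exact insert_ne_singleton (fun h => hj (by rw [h]; exact hiC)) hty
      · rintro (rfl | rfl)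
        · left
          refine ⟨x₀, hx₀, rfl, ?_⟩
          rw [image_erase_of_injOn c hinj hx₀, hcx₀,
            sdiff_erase_of_not_mem hj₀C, htype]
        · right
          refine ⟨j₀, hj₀C, rfl, ?_⟩
          rw [insert_sdiff_of_mem hj₀A, htype]
    rw [hset]
    apply Finset.card_pair
    intro h
    have := congrArg Prod.snd h
    simp only at this
    exact hj₀C (by rw [this]; exact Finset.mem_insert_self j₀ C)
  · -- Case B : c has a collision on X; (X.image c) = C.erase i
    have hAlt : (X.image c).card < X.card := by
      rcases lt_or_eq_of_le hAle with h | h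
      · exact h
      · exact absurd (Finset.injOn_of_card_image_eq (by rw [h])) hinj
    have hAge : C.card - 1 ≤ (X.image c).card := by
      have := Finset.card_le_card hCerase
      rw [Finset.card_erase_of_mem hiC] at this
      exact this
    have hXA : X.card = (X.image c).card + 1 := by omega
    obtain ⟨x₁, hx₁, x₂, hx₂, hx12, hc12, huniq⟩ :=
      exists_unique_collision (f := c) (S := X) hXA
    have hset : (Finset.univ.filter (fun q : Finset T × Finset I =>
        (IsOneCell o c q.1 q.2 ∧ q.2 \ q.1.image c = {i}) ∧ IsFace o c q.1 q.2 X C))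
        = {(X.erase x₁, C), (X.erase x₂, C)} := by
      ext q
      simp only [Finset.mem_filter, Finset.mem_univ, true_and, Finset.mem_insert,
        Finset.mem_singleton]
      rw [door_face_iff o c i hz q]
      constructor
      · rintro (⟨x, hx, rfl, hty⟩ | ⟨j, hj, rfl, hty⟩)
        · by_cases h12 : x = x₁ ∨ x = x₂
          · rcases h12 with rfl | rfl
            · left; rfl
            · right; rfl
          · exfalso
            push_neg at h12
            have himg : (X.erase x).image c = (X.image c).erase (c x) := by
              ext b
              simp only [Finset.mem_image, Finset.mem_erase]
              constructor
              · rintro ⟨y, ⟨hyx, hy⟩, rfl⟩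
                refine ⟨?_, y, hy, rfl⟩
                intro hcyx
                rcases huniq y hy x hx hcyx hyx with ⟨rfl, rfl⟩ | ⟨rfl, rfl⟩
                · exact h12.2 rfl
                · exact h12.1 rfl
              · rintro ⟨hb, y, hy, rfl⟩
                exact ⟨y, ⟨fun h => hb (by rw [h]), hy⟩, rfl⟩
            have hAsubC : (X.image c) ⊆ C := by
              have h1 : (C ∩ (X.image c)).card = C.card - 1 := by
                have h2 : 0 < C.card := Finset.card_pos.mpr ⟨i, hiC⟩
                omega
              have h2 : (X.image c).card = C.card - 1 := by omega
              have h3 : C ∩ (X.image c) ⊆ (X.image c) := Finset.inter_subset_right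
              have h4 : C ∩ (X.image c) = (X.image c) := Finset.eq_of_subset_of_card_le h3 (by omega)
              rw [← h4]
              exact Finset.inter_subset_left
            have hcxA : c x ∈ (X.image c) := Finset.mem_image_of_mem c hx
            have hcxC : c x ∈ C := hAsubC hcxA
            rw [himg, Finset.sdiff_erase hcxC, htype] at hty
            exact insert_ne_singleton (fun h => hiA (by rw [← h]; exact hcxA)) hty
        · exfalso
          have hAsubC : (X.image c) ⊆ C := by
            have h1 : (C ∩ (X.image c)).card = C.card - 1 := by
              have h2 : 0 < C.card := Finset.card_pos.mpr ⟨i, hiC⟩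
              omega
            have h2 : (X.image c).card = C.card - 1 := by omega
            have h3 : C ∩ (X.image c) ⊆ (X.image c) := Finset.inter_subset_right
            have h4 : C ∩ (X.image c) = (X.image c) := Finset.eq_of_subset_of_card_le h3 (by omega)
            rw [← h4]
            exact Finset.inter_subset_left
          have hjA : j ∉ (X.image c) := fun h => hj (hAsubC h)
          rw [Finset.insert_sdiff_of_notMem _ hjA, htype] at hty
          exact insert_ne_singleton (fun h => hj (by rw [h]; exact hiC)) hty
      · rintro (rfl | rfl)
        · left
          refine ⟨x₁, hx₁, rfl, ?_⟩
          rw [image_erase_of_twin c hx₁ hx₂ hx12 hc12, htype]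
        · left
          refine ⟨x₂, hx₂, rfl, ?_⟩
          rw [image_erase_of_twin c hx₂ hx₁ (Ne.symm hx12) hc12.symm, htype]
    rw [hset]
    apply Finset.card_pair
    intro h
    have := congrArg Prod.fst h
    simp only at this
    have : x₂ ∈ X.erase x₂ := this ▸ Finset.mem_erase.mpr ⟨Ne.symm hx12, hx₂⟩
    exact absurd this (Finset.notMem_erase x₂ X)

end Rooms2

section Doors
variable {T I : Type*} [Fintype T] [Fintype I] [DecidableEq T] [DecidableEq I]
  (o : I → LinearOrder T) (c : T → I) (i : I)

open scoped Classical

lemma lo_not_le (l : LinearOrder T) {a b : T} : ¬ l.le a b ↔ l.lt b a := by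
  letI := l; exact not_le

lemma lo_max'_mem (l : LinearOrder T) (X : Finset T) (hX : X.Nonempty) :
    @Finset.max' T l X hX ∈ X := @Finset.max'_mem T l X hX

lemma lo_le_max' (l : LinearOrder T) (X : Finset T) (hX : X.Nonempty) {x : T} (hx : x ∈ X) :
    l.le x (@Finset.max' T l X hX) := @Finset.le_max' T l X x hx

/-- the set of elements whose only witness color in `D` is `j`. -/
noncomputable def Wset (Y : Finset T) (hY : Y.Nonempty) (D : Finset I) (j : I) : Finset T :=
  Finset.univ.filter (fun y =>
    (o j).le y (mn o Y hY j) ∧ ∀ k ∈ D.erase j, (o k).lt (mn o Y hY k) y)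

lemma mem_Wset {Y : Finset T} {hY : Y.Nonempty} {D : Finset I} {j : I} {y : T} :
    y ∈ Wset o Y hY D j ↔
      (o j).le y (mn o Y hY j) ∧ ∀ k ∈ D.erase j, (o k).lt (mn o Y hY k) y := by
  simp [Wset]

/-- removing `j` from `D` keeps `Y` dominant iff `Wset … j` is empty. -/
lemma dominant_erase_iff {Y : Finset T} (hY : Y.Nonempty) {D : Finset I} {j : I}
    (hdom : Dominant o Y D) :
    Dominant o Y (D.erase j) ↔ Wset o Y hY D j = ∅ := by
  rw [dominant_iff o hY, Finset.eq_empty_iff_forall_notMem]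
  constructor
  · intro h y hyW
    rw [mem_Wset] at hyW
    obtain ⟨k, hk, hle⟩ := h y
    exact (lo_not_lt (o k)).mpr hle (hyW.2 k hk)
  · intro h y
    obtain ⟨k, hk, hle⟩ := (dominant_iff o hY).mp hdom y
    by_cases hkj : k = j
    · subst hkj
      by_contra hno
      push_neg at hno
      apply h y
      rw [mem_Wset]
      refine ⟨hle, fun k' hk' => ?_⟩
      exact hno k' hk'
    · exact ⟨k, Finset.mem_erase.mpr ⟨hkj, hk⟩, hle⟩

/-- elements of `Wset` at twin colors are outside `Y`. -/
lemma Wset_disjoint_Y {Y : Finset T} (hY : Y.Nonempty) {D : Finset I} {j j' : I}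
    (hj' : j' ∈ D) (hne : j' ≠ j) (hmu : mn o Y hY j' = mn o Y hY j)
    {y : T} (hyW : y ∈ Wset o Y hY D j) : y ∉ Y := by
  intro hyY
  rw [mem_Wset] at hyW
  have h1 : y = mn o Y hY j :=
    lo_antisymm (o j) hyW.1 (lo_min'_le (o j) Y hY hyY)
  have h2 : (o j').lt (mn o Y hY j') y := hyW.2 j' (Finset.mem_erase.mpr ⟨hne, hj'⟩)
  rw [hmu, ← h1] at h2
  exact lo_lt_irrefl (o j') y h2

lemma Wset_inter {Y : Finset T} (hY : Y.Nonempty) {D : Finset I} {j j' : I}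
    (hj' : j' ∈ D) (hne : j' ≠ j) {y : T}
    (hyW : y ∈ Wset o Y hY D j) (hyW' : y ∈ Wset o Y hY D j') : False := by
  rw [mem_Wset] at hyW hyW'
  exact (lo_not_lt (o j')).mpr hyW'.1 (hyW.2 j' (Finset.mem_erase.mpr ⟨hne, hj'⟩))

end Doors

section Doors2
variable {T I : Type*} [Fintype T] [Fintype I] [DecidableEq T] [DecidableEq I]
  (o : I → LinearOrder T) (c : T → I) (i : I)

open scoped Classical

lemma door_count_nonempty {Y : Finset T} {D : Finset I}
    (hone : IsOneCell o c Y D) (htype : D \ Y.image c = {i}) (hY : Y.Nonempty) :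
    (Finset.univ.filter (fun p : Finset T × Finset I =>
      (IsZeroCell o c p.1 p.2 ∧ (p.2 = p.1.image c ∨ p.2 \ p.1.image c = {i})) ∧
      IsFace o c Y D p.1 p.2)).card = 2 := by
  obtain ⟨hcinj, hcimg, hiD⟩ := door_color o c hone htype
  obtain ⟨⟨hDne, hdom, hcell3⟩, hDcard⟩ := hone
  have himage : D.image (mn o Y hY) = Y := by
    apply Finset.Subset.antisymm
    · intro v hv
      obtain ⟨j, hj, hjv⟩ := Finset.mem_image.mp hv
      rw [← hjv]; exact lo_min'_mem (o j) Y hY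
    · exact dominant_subset_image o hY hdom
  obtain ⟨j₁, hj₁D, j₂, hj₂D, hj12, hmu12, huniq⟩ :=
    exists_unique_collision (f := mn o Y hY) (S := D) (by rw [himage]; exact hDcard)
  set elt : I → Finset T × Finset I := fun j =>
    if h : (Wset o Y hY D j).Nonempty then
      (insert (@Finset.max' T (o j) (Wset o Y hY D j) h) Y, D)
    else (Y, D.erase j) with helt
  -- membership of elt j
  have hmemelt : ∀ j j', j ∈ D → j' ∈ D → j' ≠ j → mn o Y hY j' = mn o Y hY j →
      ((IsZeroCell o c (elt j).1 (elt j).2 ∧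
        ((elt j).2 = (elt j).1.image c ∨ (elt j).2 \ (elt j).1.image c = {i})) ∧
        IsFace o c Y D (elt j).1 (elt j).2) := by
    intro j j' hjD hj'D hne hmu'
    by_cases hW : (Wset o Y hY D j).Nonempty
    · have helt' : elt j = (insert (@Finset.max' T (o j) (Wset o Y hY D j) hW) Y, D) := by
        simp only [helt]; rw [dif_pos hW]
      set z := @Finset.max' T (o j) (Wset o Y hY D j) hW with hzdef
      have hzW : z ∈ Wset o Y hY D j := lo_max'_mem (o j) _ hW
      have hzY : z ∉ Y := Wset_disjoint_Y o hY hj'D hne hmu' hzW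
      rw [mem_Wset] at hzW
      obtain ⟨hz1, hz2⟩ := hzW
      have hdomX : Dominant o (insert z Y) D := by
        rw [dominant_iff o (Finset.insert_nonempty z Y)]
        intro y
        obtain ⟨k, hk, hle⟩ := (dominant_iff o hY).mp hdom y
        by_cases hkj : k = j
        · subst hkj
          by_cases hex : ∃ k' ∈ D.erase k, (o k').le y (mn o Y hY k')
          · obtain ⟨k', hk', hle'⟩ := hex
            refine ⟨k', (Finset.erase_subset k D) hk', ?_⟩
            rw [mn_insert_of_not_le o hY ((lo_not_le (o k')).mpr (hz2 k' hk'))]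
            exact hle'
          · push_neg at hex
            have hyW : y ∈ Wset o Y hY D k := by
              rw [mem_Wset]
              exact ⟨hle, fun k' hk' => hex k' hk'⟩
            refine ⟨k, hk, ?_⟩
            rw [mn_insert_of_le o hY hz1]
            exact lo_le_max' (o k) _ hW hyW
        · refine ⟨k, hk, ?_⟩
          rw [mn_insert_of_not_le o hY
            ((lo_not_le (o k)).mpr (hz2 k (Finset.mem_erase.mpr ⟨hkj, hk⟩)))]
          exact hle
      have hsub : D \ (insert z Y).image c ⊆ {i} := by
        intro a ha
        rw [Finset.mem_sdiff, Finset.image_insert, Finset.mem_insert] at ha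
        push_neg at ha
        obtain ⟨haD, hacz, haY⟩ := ha
        by_contra hai
        rw [Finset.mem_singleton] at hai
        exact haY (hcimg ▸ Finset.mem_erase.mpr ⟨hai, haD⟩)
      have hzc : IsZeroCell o c (insert z Y) D := by
        refine ⟨⟨hDne, hdomX, ?_⟩, ?_⟩
        · calc (D \ (insert z Y).image c).card ≤ ({i} : Finset I).card :=
                Finset.card_le_card hsub
            _ = 1 := Finset.card_singleton i
        · rw [Finset.card_insert_of_notMem hzY, hDcard]
      refine ⟨⟨by rw [helt']; exact hzc, ?_⟩, ?_⟩
      · rw [helt']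
        by_cases hcz : c z = i
        · left
          simp only
          rw [Finset.image_insert, hcz, hcimg, Finset.insert_erase hiD]
        · right
          simp only
          apply Finset.Subset.antisymm hsub
          intro a ha
          rw [Finset.mem_singleton] at ha
          rw [ha, Finset.mem_sdiff, Finset.image_insert, Finset.mem_insert]
          push_neg
          exact ⟨hiD, fun h => hcz h.symm, by rw [hcimg]; exact Finset.notMem_erase i D⟩
      · rw [helt']
        exact ⟨⟨⟨hDne, hdom, hcell3⟩, hDcard⟩, hzc,
          Or.inl ⟨rfl, z, Finset.mem_insert_self z Y, (Finset.erase_insert hzY).symm⟩⟩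
    · have hWe : Wset o Y hY D j = ∅ := Finset.not_nonempty_iff_eq_empty.mp hW
      have helt' : elt j = (Y, D.erase j) := by
        simp only [helt]; rw [dif_neg hW]
      have hdomY' : Dominant o Y (D.erase j) := (dominant_erase_iff o hY hdom).mpr hWe
      have hsub : D.erase j \ Y.image c ⊆ {i} := by
        intro a ha
        rw [Finset.mem_sdiff, Finset.mem_erase] at ha
        by_contra hai
        rw [Finset.mem_singleton] at hai
        exact ha.2 (hcimg ▸ Finset.mem_erase.mpr ⟨hai, ha.1.2⟩)
      have hzc : IsZeroCell o c Y (D.erase j) := by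
        refine ⟨⟨?_, hdomY', ?_⟩, ?_⟩
        · rw [← Finset.card_pos, Finset.card_erase_of_mem hjD, hDcard]
          have : 0 < Y.card := Finset.card_pos.mpr hY
          omega
        · calc (D.erase j \ Y.image c).card ≤ ({i} : Finset I).card :=
              Finset.card_le_card hsub
            _ = 1 := Finset.card_singleton i
        · rw [Finset.card_erase_of_mem hjD, hDcard]
          omega
      refine ⟨⟨by rw [helt']; exact hzc, ?_⟩, ?_⟩
      · rw [helt']
        by_cases hji : j = i
        · left
          simp only
          rw [hji, hcimg]
        · right
          simp only
          apply Finset.Subset.antisymm hsub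
          intro a ha
          rw [Finset.mem_singleton] at ha
          rw [ha, Finset.mem_sdiff, Finset.mem_erase]
          exact ⟨⟨fun h => hji h.symm, hiD⟩, by rw [hcimg]; exact Finset.notMem_erase i D⟩
      · rw [helt']
        exact ⟨⟨⟨hDne, hdom, hcell3⟩, hDcard⟩, hzc,
          Or.inr ⟨rfl, j, Finset.notMem_erase j D, (Finset.insert_erase hjD).symm⟩⟩
  -- the filter set is exactly {elt j₁, elt j₂}
  have hset : (Finset.univ.filter (fun p : Finset T × Finset I =>
      (IsZeroCell o c p.1 p.2 ∧ (p.2 = p.1.image c ∨ p.2 \ p.1.image c = {i})) ∧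
      IsFace o c Y D p.1 p.2)) = {elt j₁, elt j₂} := by
    ext p
    simp only [Finset.mem_filter, Finset.mem_univ, true_and, Finset.mem_insert,
      Finset.mem_singleton]
    constructor
    · rintro ⟨⟨hz, _⟩, _, _, geom⟩
      rcases geom with ⟨hDC, x, hxp, hYer⟩ | ⟨hYX, j, hjC, hDins⟩
      · -- kind a : p = (insert x Y, D)
        have hxY : x ∉ Y := by rw [hYer]; exact Finset.notMem_erase x p.1
        have hp1 : p.1 = insert x Y := by rw [hYer, Finset.insert_erase hxp]
        have hXne : p.1.Nonempty := ⟨x, hxp⟩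
        have hzD : IsZeroCell o c p.1 D := by rw [hDC]; exact hz
        have hdomX : Dominant o p.1 D := hzD.1.2.1
        have hmuY : ∀ k, mn o Y hY k ∈ Y := fun k => lo_min'_mem (o k) Y hY
        have hmuX : ∀ k, mn o Y hY k ∈ p.1 := fun k => by
          rw [hp1]; exact Finset.mem_insert_of_mem (hmuY k)
        have step1 : ∀ k, mn o p.1 hXne k = x ∨ mn o p.1 hXne k = mn o Y hY k := by
          intro k
          have hmem : mn o p.1 hXne k ∈ insert x Y := by
            rw [← hp1]; exact lo_min'_mem (o k) p.1 hXne
          rw [Finset.mem_insert] at hmem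
          rcases hmem with h | h
          · exact Or.inl h
          · right
            exact lo_antisymm (o k) (lo_min'_le (o k) p.1 hXne (hmuX k))
              (lo_min'_le (o k) Y hY h)
        have hinjX : Set.InjOn (mn o p.1 hXne) ↑D := zeroCell_injOn o c hzD hXne
        obtain ⟨k₀, hk₀D, hk₀⟩ := dominant_mem_eq_min o hXne hdomX hxp
        have main : ∀ j j' : I, j ∈ D → j' ∈ D → j' ≠ j →
            mn o Y hY j' = mn o Y hY j → mn o p.1 hXne j = x → p = elt j := by
          intro j j' hjD hj'D hne hmu' hjx
          have hxW : x ∈ Wset o Y hY D j := by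
            rw [mem_Wset]
            constructor
            · rw [← hjx]
              exact lo_min'_le (o j) p.1 hXne (hmuX j)
            · intro k hk
              rw [Finset.mem_erase] at hk
              by_contra hnlt
              rw [lo_not_lt (o k)] at hnlt
              have hkx : mn o p.1 hXne k = x := by
                apply lo_antisymm (o k) (lo_min'_le (o k) p.1 hXne hxp)
                apply lo_le_min'
                intro y hy
                rw [hp1, Finset.mem_insert] at hy
                rcases hy with rfl | hy
                · exact lo_le_refl (o k) y
                · exact lo_le_trans (o k) hnlt (lo_min'_le (o k) Y hY hy)
              exact hk.1 (hinjX hk.2 hjD (by rw [hkx, hjx]))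
          have hWne : (Wset o Y hY D j).Nonempty := ⟨x, hxW⟩
          have hub : ∀ y ∈ Wset o Y hY D j, (o j).le y x := by
            intro y hy
            obtain ⟨k, hkD, hkle⟩ := (dominant_iff o hXne).mp hdomX y
            by_cases hkj : k = j
            · subst hkj
              rw [hjx] at hkle
              exact hkle
            · exfalso
              rcases step1 k with h | h
              · exact hkj (hinjX hkD hjD (by rw [h, hjx]))
              · rw [mem_Wset] at hy
                rw [h] at hkle
                exact (lo_not_lt (o k)).mpr hkle
                  (hy.2 k (Finset.mem_erase.mpr ⟨hkj, hkD⟩))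
          have hmax : @Finset.max' T (o j) (Wset o Y hY D j) hWne = x :=
            lo_antisymm (o j) (hub _ (lo_max'_mem (o j) _ hWne)) (lo_le_max' (o j) _ hWne hxW)
          have : elt j = (insert x Y, D) := by
            simp only [helt]
            rw [dif_pos hWne, hmax]
          rw [this]
          exact Prod.ext hp1 hDC.symm
        -- k₀ must be one of the twins
        have hk₀12 : k₀ = j₁ ∨ k₀ = j₂ := by
          by_contra hno
          push_neg at hno
          have h1 : mn o p.1 hXne j₁ = mn o Y hY j₁ := by
            rcases step1 j₁ with h | h
            · exact absurd (hinjX hj₁D hk₀D (by rw [h, hk₀])) (Ne.symm hno.1)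
            · exact h
          have h2 : mn o p.1 hXne j₂ = mn o Y hY j₂ := by
            rcases step1 j₂ with h | h
            · exact absurd (hinjX hj₂D hk₀D (by rw [h, hk₀])) (Ne.symm hno.2)
            · exact h
          exact hj12 (hinjX hj₁D hj₂D (by rw [h1, h2, hmu12]))
        rcases hk₀12 with h | h
        · exact Or.inl (main j₁ j₂ hj₁D hj₂D (Ne.symm hj12) hmu12.symm
            (by rw [← h]; exact hk₀))
        · exact Or.inr (main j₂ j₁ hj₂D hj₁D hj12 hmu12 (by rw [← h]; exact hk₀))
      · -- kind b : p = (Y, D.erase j)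
        have hjD : j ∈ D := by rw [hDins]; exact Finset.mem_insert_self j p.2
        have hC : p.2 = D.erase j := by rw [hDins, Finset.erase_insert hjC]
        have hdomY' : Dominant o Y (D.erase j) := by
          have := hz.1.2.1
          rw [← hYX, hC] at this
          exact this
        have hWj : Wset o Y hY D j = ∅ := (dominant_erase_iff o hY hdom).mp hdomY'
        obtain ⟨k, hk, hkeq⟩ := dominant_mem_eq_min o hY hdomY' (lo_min'_mem (o j) Y hY)
        rw [Finset.mem_erase] at hk
        have hj12' : (k = j₁ ∧ j = j₂) ∨ (k = j₂ ∧ j = j₁) :=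
          huniq k hk.2 j hjD hkeq hk.1
        have hpe : ∀ jj, jj = j → p = elt jj := by
          rintro jj rfl
          have : elt jj = (Y, D.erase jj) := by
            simp only [helt]
            rw [dif_neg (by rw [hWj]; exact Finset.not_nonempty_empty)]
          rw [this]
          exact Prod.ext hYX.symm hC
        rcases hj12' with ⟨_, h⟩ | ⟨_, h⟩
        · exact Or.inr (hpe j₂ h.symm)
        · exact Or.inl (hpe j₁ h.symm)
    · rintro (rfl | rfl)
      · exact hmemelt j₁ j₂ hj₁D hj₂D (Ne.symm hj12) hmu12.symm
      · exact hmemelt j₂ j₁ hj₂D hj₁D hj12 hmu12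
  rw [hset]
  apply Finset.card_pair
  -- elt j₁ ≠ elt j₂
  intro heq
  by_cases hW1 : (Wset o Y hY D j₁).Nonempty
  · by_cases hW2 : (Wset o Y hY D j₂).Nonempty
    · have h1 : elt j₁ = (insert (@Finset.max' T (o j₁) _ hW1) Y, D) := by
        simp only [helt]; rw [dif_pos hW1]
      have h2 : elt j₂ = (insert (@Finset.max' T (o j₂) _ hW2) Y, D) := by
        simp only [helt]; rw [dif_pos hW2]
      rw [h1, h2] at heq
      have hfst := congrArg Prod.fst heq
      simp only at hfst
      set z₁ := @Finset.max' T (o j₁) (Wset o Y hY D j₁) hW1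
      set z₂ := @Finset.max' T (o j₂) (Wset o Y hY D j₂) hW2
      have hz₁W : z₁ ∈ Wset o Y hY D j₁ := lo_max'_mem (o j₁) _ hW1
      have hz₂W : z₂ ∈ Wset o Y hY D j₂ := lo_max'_mem (o j₂) _ hW2
      have hz₁Y : z₁ ∉ Y := Wset_disjoint_Y o hY hj₂D (Ne.symm hj12) hmu12.symm hz₁W
      have : z₁ ∈ insert z₂ Y := hfst ▸ Finset.mem_insert_self z₁ Y
      rcases Finset.mem_insert.mp this with h | h
      · exact Wset_inter o hY hj₂D (Ne.symm hj12) hz₁W (by rw [h]; exact hz₂W)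
      · exact hz₁Y h
    · have h1 : elt j₁ = (insert (@Finset.max' T (o j₁) _ hW1) Y, D) := by
        simp only [helt]; rw [dif_pos hW1]
      have h2 : elt j₂ = (Y, D.erase j₂) := by
        simp only [helt]; rw [dif_neg hW2]
      rw [h1, h2] at heq
      have hsnd := congrArg Prod.snd heq
      simp only at hsnd
      exact Finset.notMem_erase j₂ D (by rw [← hsnd]; exact hj₂D)
  · by_cases hW2 : (Wset o Y hY D j₂).Nonempty
    · have h1 : elt j₁ = (Y, D.erase j₁) := by
        simp only [helt]; rw [dif_neg hW1]
      have h2 : elt j₂ = (insert (@Finset.max' T (o j₂) _ hW2) Y, D) := by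
        simp only [helt]; rw [dif_pos hW2]
      rw [h1, h2] at heq
      have hsnd := congrArg Prod.snd heq
      simp only at hsnd
      exact Finset.notMem_erase j₁ D (by rw [hsnd]; exact hj₁D)
    · have h1 : elt j₁ = (Y, D.erase j₁) := by
        simp only [helt]; rw [dif_neg hW1]
      have h2 : elt j₂ = (Y, D.erase j₂) := by
        simp only [helt]; rw [dif_neg hW2]
      rw [h1, h2] at heq
      have hsnd := congrArg Prod.snd heq
      simp only at hsnd
      have : j₂ ∈ D.erase j₂ := by
        rw [← hsnd]
        exact Finset.mem_erase.mpr ⟨Ne.symm hj12, hj₂D⟩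
      exact Finset.notMem_erase j₂ D this

end Doors2

section DoorsEmpty
variable {T I : Type*} [Fintype T] [Fintype I] [Nonempty T] [DecidableEq T] [DecidableEq I]
  (o : I → LinearOrder T) (c : T → I) (i : I)

open scoped Classical

lemma oneCell_empty : IsOneCell o c (∅ : Finset T) ({i} : Finset I) := by
  refine ⟨⟨Finset.singleton_nonempty i, ?_, ?_⟩, ?_⟩
  · intro h
    exact absurd h Finset.not_nonempty_empty
  · simp
  · simp

lemma door_count_empty :
    (Finset.univ.filter (fun p : Finset T × Finset I =>
      (IsZeroCell o c p.1 p.2 ∧ (p.2 = p.1.image c ∨ p.2 \ p.1.image c = {i})) ∧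
      IsFace o c (∅ : Finset T) ({i} : Finset I) p.1 p.2)).card = 1 := by
  have hu : (Finset.univ : Finset T).Nonempty := Finset.univ_nonempty
  set t : T := @Finset.max' T (o i) Finset.univ hu with ht
  have htop : ∀ y : T, (o i).le y t := fun y => lo_le_max' (o i) _ hu (Finset.mem_univ y)
  have hzc : IsZeroCell o c ({t} : Finset T) ({i} : Finset I) := by
    refine ⟨⟨Finset.singleton_nonempty i, ?_, ?_⟩, by simp⟩
    · intro hX ⟨y, hy⟩
      have h1 := hy i (Finset.mem_singleton_self i)
      rw [show (@Finset.min' T (o i) {t} hX) = t from @Finset.min'_singleton T (o i) t] at h1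
      exact (lo_not_lt (o i)).mpr (htop y) h1
    · calc (({i} : Finset I) \ ({t} : Finset T).image c).card
          ≤ ({i} : Finset I).card := Finset.card_le_card (Finset.sdiff_subset)
        _ = 1 := Finset.card_singleton i
  rw [Finset.card_eq_one]
  refine ⟨({t}, {i}), ?_⟩
  ext p
  simp only [Finset.mem_filter, Finset.mem_univ, true_and, Finset.mem_singleton]
  constructor
  · rintro ⟨⟨hz, _⟩, _, _, geom⟩
    rcases geom with ⟨hDC, x, hxp, hYer⟩ | ⟨hYX, _, _, _⟩
    · have hp1 : p.1 = {x} := by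
        apply Finset.Subset.antisymm
        · intro y hy
          rw [Finset.mem_singleton]
          by_contra hyx
          have : y ∈ p.1.erase x := Finset.mem_erase.mpr ⟨hyx, hy⟩
          rw [← hYer] at this
          exact absurd this (Finset.notMem_empty y)
        · intro y hy
          rw [Finset.mem_singleton] at hy
          rw [hy]; exact hxp
      -- x is the (o i)-maximum
      have hdom : Dominant o p.1 p.2 := hz.1.2.1
      rw [hp1, ← hDC] at hdom
      have hxt : x = t := by
        apply lo_antisymm (o i) (htop x)
        by_contra hlt
        rw [lo_not_le (o i)] at hlt
        apply hdom (Finset.singleton_nonempty x)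
        refine ⟨t, fun j hj => ?_⟩
        rw [Finset.mem_singleton] at hj
        subst hj
        rw [show (@Finset.min' T (o j) {x} (Finset.singleton_nonempty x)) = x from
          @Finset.min'_singleton T (o j) x]
        exact hlt
      have : p.1 = {t} := by rw [hp1, hxt]
      exact Prod.ext this hDC.symm
    · exfalso
      have := zeroCell_nonempty o c hz
      rw [← hYX] at this
      exact absurd this Finset.not_nonempty_empty
  · rintro rfl
    refine ⟨⟨hzc, ?_⟩, oneCell_empty o c i, hzc, Or.inl ⟨rfl, t, Finset.mem_singleton_self t,
      (Finset.erase_singleton t).symm⟩⟩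
    simp only
    by_cases hct : c t = i
    · left
      rw [Finset.image_singleton, hct]
    · right
      ext a
      simp only [Finset.image_singleton, Finset.mem_sdiff, Finset.mem_singleton]
      constructor
      · rintro ⟨h, _⟩; exact h
      · rintro rfl
        exact ⟨rfl, fun h => hct h.symm⟩

end DoorsEmpty


open Classical in
/-- Fix a color `i`. Let `e` be the number of balanced 0-cells, `f` the number of
non-balanced 0-cells of type `i`, and `g` the number of 1-cells of type `i` other
than `(∅, {i})`. Then `e + 2f = 1 + 2g`; in particular `e` is odd. -/
theorem stmt13 {T I : Type*} [Fintype T] [Fintype I] [Nonempty T] [Nonempty I]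
    [DecidableEq T] [DecidableEq I] (o : I → LinearOrder T) (c : T → I) (i : I) :
    (Finset.univ.filter (fun p : Finset T × Finset I =>
        IsZeroCell o c p.1 p.2 ∧ p.2 = p.1.image c)).card
      + 2 * (Finset.univ.filter (fun p : Finset T × Finset I =>
        IsZeroCell o c p.1 p.2 ∧ p.2 \ p.1.image c = {i})).card
    = 1 + 2 * (Finset.univ.filter (fun p : Finset T × Finset I =>
        IsOneCell o c p.1 p.2 ∧ p.2 \ p.1.image c = {i} ∧ p ≠ (∅, {i}))).card ∧
    Odd (Finset.univ.filter (fun p : Finset T × Finset I =>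
        IsZeroCell o c p.1 p.2 ∧ p.2 = p.1.image c)).card := by

  classical
  set RS : Finset (Finset T × Finset I) := Finset.univ.filter (fun p =>
    IsZeroCell o c p.1 p.2 ∧ (p.2 = p.1.image c ∨ p.2 \ p.1.image c = {i})) with hRS
  set DS : Finset (Finset T × Finset I) := Finset.univ.filter (fun q =>
    IsOneCell o c q.1 q.2 ∧ q.2 \ q.1.image c = {i}) with hDS
  have hdc : ∑ p ∈ RS, (DS.filter (fun q => IsFace o c q.1 q.2 p.1 p.2)).card
      = ∑ q ∈ DS, (RS.filter (fun p => IsFace o c q.1 q.2 p.1 p.2)).card := by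
    simp_rw [Finset.card_filter]
    exact Finset.sum_comm
  -- left side per-element counts
  have hL1 : ∀ p ∈ RS, (DS.filter (fun q => IsFace o c q.1 q.2 p.1 p.2)).card
      = if p.2 = p.1.image c then 1 else 2 := by
    intro p hp
    rw [hRS, Finset.mem_filter] at hp
    obtain ⟨-, hz, hbt⟩ := hp
    have hfilter : DS.filter (fun q => IsFace o c q.1 q.2 p.1 p.2)
        = Finset.univ.filter (fun q : Finset T × Finset I =>
            (IsOneCell o c q.1 q.2 ∧ q.2 \ q.1.image c = {i})
            ∧ IsFace o c q.1 q.2 p.1 p.2) := by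
      rw [hDS, Finset.filter_filter]
    rw [hfilter]
    by_cases hbal : p.2 = p.1.image c
    · rw [if_pos hbal]
      exact room_count_balanced o c i hz hbal
    · rw [if_neg hbal]
      rcases hbt with h | h
      · exact absurd h hbal
      · exact room_count_type o c i hz h
  have hL2 : ∑ p ∈ RS, (DS.filter (fun q => IsFace o c q.1 q.2 p.1 p.2)).card
      = (RS.filter (fun p => p.2 = p.1.image c)).card
        + 2 * (RS.filter (fun p => ¬ p.2 = p.1.image c)).card := by
    rw [Finset.sum_congr rfl hL1, Finset.sum_ite, Finset.sum_const, Finset.sum_const,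
      smul_eq_mul, smul_eq_mul, mul_one, mul_comm]
  -- right side per-element counts
  have hR1 : ∀ q ∈ DS, (RS.filter (fun p => IsFace o c q.1 q.2 p.1 p.2)).card
      = if q = ((∅ : Finset T), ({i} : Finset I)) then 1 else 2 := by
    intro q hq
    rw [hDS, Finset.mem_filter] at hq
    obtain ⟨-, hone, htype⟩ := hq
    have hfilter : RS.filter (fun p => IsFace o c q.1 q.2 p.1 p.2)
        = Finset.univ.filter (fun p : Finset T × Finset I =>
            (IsZeroCell o c p.1 p.2 ∧ (p.2 = p.1.image c ∨ p.2 \ p.1.image c = {i}))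
            ∧ IsFace o c q.1 q.2 p.1 p.2) := by
      rw [hRS, Finset.filter_filter]
    rw [hfilter]
    by_cases hq0 : q = ((∅ : Finset T), ({i} : Finset I))
    · rw [if_pos hq0, hq0]
      exact door_count_empty o c i
    · rw [if_neg hq0]
      have hYne : q.1.Nonempty := by
        rcases Finset.eq_empty_or_nonempty q.1 with h | h
        · exfalso
          apply hq0
          have h2 : q.2 = {i} := by rw [← htype, h]; simp
          exact Prod.ext h h2
        · exact h
      exact door_count_nonempty o c i hone htype hYne
  have hmem0 : ((∅ : Finset T), ({i} : Finset I)) ∈ DS := by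
    rw [hDS, Finset.mem_filter]
    exact ⟨Finset.mem_univ _, oneCell_empty o c i, by simp⟩
  have hR2 : ∑ q ∈ DS, (RS.filter (fun p => IsFace o c q.1 q.2 p.1 p.2)).card
      = 1 + 2 * (DS.filter (fun q => ¬ q = ((∅ : Finset T), ({i} : Finset I)))).card := by
    rw [Finset.sum_congr rfl hR1, Finset.sum_ite, Finset.sum_const, Finset.sum_const,
      smul_eq_mul, smul_eq_mul, mul_one, mul_comm]
    congr 1
    rw [Finset.filter_eq', if_pos hmem0, Finset.card_singleton]
  -- identify the three filters with those in the statement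
  have hE : RS.filter (fun p => p.2 = p.1.image c)
      = Finset.univ.filter (fun p : Finset T × Finset I =>
          IsZeroCell o c p.1 p.2 ∧ p.2 = p.1.image c) := by
    ext p
    simp only [hRS, Finset.filter_filter, Finset.mem_filter, Finset.mem_univ, true_and]
    tauto
  have hF : RS.filter (fun p => ¬ p.2 = p.1.image c)
      = Finset.univ.filter (fun p : Finset T × Finset I =>
          IsZeroCell o c p.1 p.2 ∧ p.2 \ p.1.image c = {i}) := by
    ext p
    simp only [hRS, Finset.filter_filter, Finset.mem_filter, Finset.mem_univ, true_and]
    constructor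
    · rintro ⟨⟨hz, hbt⟩, hnb⟩
      rcases hbt with h | h
      · exact absurd h hnb
      · exact ⟨hz, h⟩
    · rintro ⟨hz, ht⟩
      refine ⟨⟨hz, Or.inr ht⟩, fun hb => ?_⟩
      rw [← hb, Finset.sdiff_self] at ht
      exact (Finset.singleton_ne_empty i) ht.symm
  have hG : DS.filter (fun q => ¬ q = ((∅ : Finset T), ({i} : Finset I)))
      = Finset.univ.filter (fun p : Finset T × Finset I =>
          IsOneCell o c p.1 p.2 ∧ p.2 \ p.1.image c = {i} ∧ p ≠ (∅, {i})) := by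
    ext p
    simp only [hDS, Finset.filter_filter, Finset.mem_filter, Finset.mem_univ, true_and, ne_eq]
    tauto
  have hmain : (Finset.univ.filter (fun p : Finset T × Finset I =>
        IsZeroCell o c p.1 p.2 ∧ p.2 = p.1.image c)).card
      + 2 * (Finset.univ.filter (fun p : Finset T × Finset I =>
        IsZeroCell o c p.1 p.2 ∧ p.2 \ p.1.image c = {i})).card
    = 1 + 2 * (Finset.univ.filter (fun p : Finset T × Finset I =>
        IsOneCell o c p.1 p.2 ∧ p.2 \ p.1.image c = {i} ∧ p ≠ (∅, {i}))).card := by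
    rw [← hE, ← hF, ← hG, ← hL2, hdc, hR2]
  refine ⟨hmain, ?_⟩
  rw [Nat.odd_iff]
  omega
end
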